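/- arXiv:2107.10660 — 2 statements merged into one kernel-verified Lean document; each statement's English description precedes it below -/
import Mathlib

section
/- Let G be a connected simple graph that contains an induced cycle C_4. Then either G is isomorphic to one of the graphs K_{2,l} for some l ≥ 2, W_4 = K_1 ∨ C_4, or E_2 ∨ C_4, or there exists an edge e ∈ E(G) such that G/e contains an induced C_4. -/
open SimpleGraph

/-- Contraction of the edge between adjacent vertices `u` and `v`:
`v` is merged into `u`, so the vertex set is `V \ {v}`, and `u` inherits
the neighbours of `v`; loops and multiple edges are removed. -/
def SimpleGraph.contractEdge {V : Type*} (G : SimpleGraph V) (u v : V) :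
    SimpleGraph {x : V // x ≠ v} where
  Adj a b := a ≠ b ∧
    (G.Adj a.1 b.1 ∨ (a.1 = u ∧ G.Adj v b.1) ∨ (b.1 = u ∧ G.Adj v a.1))
  symm := by
    constructor
    rintro a b ⟨hab, h⟩
    refine ⟨hab.symm, ?_⟩
    rcases h with h | ⟨h1, h2⟩ | ⟨h1, h2⟩
    · exact Or.inl h.symm
    · exact Or.inr (Or.inr ⟨h1, h2⟩)
    · exact Or.inr (Or.inl ⟨h1, h2⟩)
  loopless := by constructor; rintro a ⟨hab, -⟩; exact hab rfl

/-- `G` contains an induced subgraph isomorphic to `H`. -/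
def SimpleGraph.HasInduced {V W : Type*} (G : SimpleGraph V) (H : SimpleGraph W) : Prop :=
  ∃ S : Set V, Nonempty (G.induce S ≃g H)

/-- A set of vertices is independent if its vertices are pairwise nonadjacent. -/
def SimpleGraph.IsIndependentSet {V : Type*} (G : SimpleGraph V) (S : Set V) : Prop :=
  S.Pairwise fun a b => ¬ G.Adj a b

/-- `2K₂`: two disjoint edges. -/
def twoK2 : SimpleGraph (Fin 4) := fromEdgeSet {s(0,1), s(2,3)}

/-- The hammer: a triangle `0,1,2` with the path `2-3-4` of length two attached. -/
def hammerGraph : SimpleGraph (Fin 5) :=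
  fromEdgeSet {s(0,1), s(0,2), s(1,2), s(2,3), s(3,4)}

/-- The butterfly: two triangles `0,1,2` and `2,3,4` sharing exactly the vertex `2`. -/
def butterflyGraph : SimpleGraph (Fin 5) :=
  fromEdgeSet {s(0,1), s(0,2), s(1,2), s(2,3), s(2,4), s(3,4)}

/-- The wheel `W₄ = K₁ ∨ C₄`: the vertex `4` joined to the 4-cycle `0-1-2-3`. -/
def W4Graph : SimpleGraph (Fin 5) :=
  fromEdgeSet {s(0,1), s(1,2), s(2,3), s(3,0), s(4,0), s(4,1), s(4,2), s(4,3)}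

/-- `E₂ ∨ C₄`: the two nonadjacent vertices `4, 5` each joined to the 4-cycle `0-1-2-3`. -/
def E2JoinC4Graph : SimpleGraph (Fin 6) :=
  fromEdgeSet {s(0,1), s(1,2), s(2,3), s(3,0),
    s(4,0), s(4,1), s(4,2), s(4,3), s(5,0), s(5,1), s(5,2), s(5,3)}

/-!
Fix an induced square `a b c d` and suppose that no edge contraction keeps an induced `C₄`.
Contracting an edge with both ends off the square, or an edge from a corner `x` to an outside
vertex that misses the corner opposite to `x`, leaves the square induced. Hence the outside
vertices form an independent set, and each of them sees both or neither vertex of each opposite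
pair. Squares through outside vertices rule out the remaining mixtures: either every outside
vertex sees exactly the same opposite pair, and `G = K_{2,l}`, or every outside vertex sees the
whole square, and there are at most two of them, so that `G` is `W₄` or `E₂ ∨ C₄`.
-/

namespace SimpleGraph

variable {V W : Type*} {G : SimpleGraph V} {a b c d u v w x y z w₀ w₁ w₂ : V}

theorem hasInduced_iff_isIndContained {H : SimpleGraph W} : G.HasInduced H ↔ H ⊴ G := by
  simp only [HasInduced, isIndContained_iff_exists_iso_induce]
  exact exists_congr fun _ => ⟨fun ⟨e⟩ => ⟨e.symm⟩, fun ⟨e⟩ => ⟨e.symm⟩⟩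

theorem nonempty_iso_of_bijective {H : SimpleGraph W} {f : W → V} (hf : f.Bijective)
    (hadj : ∀ i j, G.Adj (f i) (f j) ↔ H.Adj i j) : Nonempty (G ≃g H) :=
  ⟨(⟨Equiv.ofBijective f hf, hadj _ _⟩ : H ≃g G).symm⟩

theorem nonempty_iso_completeBipartiteGraph (p : V → Prop) [DecidablePred p]
    (hadj : ∀ x y, G.Adj x y ↔ (p x ↔ ¬p y)) :
    Nonempty (G ≃g completeBipartiteGraph {x // p x} {x // ¬p x}) := by
  refine ⟨⟨(Equiv.sumCompl p).symm, fun {x y} => ?_⟩⟩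
  by_cases hx : p x <;> by_cases hy : p y <;>
    simp [Equiv.sumCompl_symm_apply_of_pos, Equiv.sumCompl_symm_apply_of_neg, hadj, hx, hy]

theorem contractEdge_adj_of_adj (hx : x ≠ v) (hy : y ≠ v) (hxy : G.Adj x y) :
    (G.contractEdge u v).Adj ⟨x, hx⟩ ⟨y, hy⟩ :=
  ⟨fun h => hxy.ne (congrArg Subtype.val h), Or.inl hxy⟩

theorem contractEdge_not_adj (hx : x ≠ v) (hy : y ≠ v) (hxy : ¬G.Adj x y)
    (hxu : x = u → ¬G.Adj v y) (hyu : y = u → ¬G.Adj v x) :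
    ¬(G.contractEdge u v).Adj ⟨x, hx⟩ ⟨y, hy⟩ := by
  rintro ⟨-, h | ⟨rfl, h⟩ | ⟨rfl, h⟩⟩
  exacts [hxy h, hxu rfl h, hyu rfl h]

variable (G) in
structure IsInducedSquare (a b c d : V) : Prop where
  adj_ab : G.Adj a b
  adj_bc : G.Adj b c
  adj_cd : G.Adj c d
  adj_da : G.Adj d a
  not_adj_ac : ¬G.Adj a c
  not_adj_bd : ¬G.Adj b d
  ne_ac : a ≠ c
  ne_bd : b ≠ d

variable (G) in
def NoContractionHasInducedC4 : Prop :=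
  ∀ u v, G.Adj u v → ¬(G.contractEdge u v).HasInduced (cycleGraph 4)

namespace IsInducedSquare

theorem rotate (h : G.IsInducedSquare a b c d) : G.IsInducedSquare b c d a :=
  ⟨h.adj_bc, h.adj_cd, h.adj_da, h.adj_ab, h.not_adj_bd, fun h' => h.not_adj_ac h'.symm,
    h.ne_bd, h.ne_ac.symm⟩

private theorem mem_rotate_iff : x ∈ ({b, c, d, a} : Set V) ↔ x ∈ ({a, b, c, d} : Set V) := by
  simp only [Set.mem_insert_iff, Set.mem_singleton_iff]
  tauto

private theorem not_mem_iff : x ∉ ({a, b, c, d} : Set V) ↔ x ≠ a ∧ x ≠ b ∧ x ≠ c ∧ x ≠ d := by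
  simp only [Set.mem_insert_iff, Set.mem_singleton_iff, not_or, ne_eq]

theorem hasInduced (h : G.IsInducedSquare a b c d) : G.HasInduced (cycleGraph 4) := by
  obtain ⟨hab, hbc, hcd, hda, hac, hbd, hac', hbd'⟩ := h
  have hinj : Function.Injective ![a, b, c, d] := by
    simp only [Function.Injective, Fin.forall_fin_succ]
    simp [hab.ne, hbc.ne, hcd.ne, hda.ne, hab.ne', hbc.ne', hcd.ne', hda.ne', hac', hbd',
      hac'.symm, hbd'.symm]
  refine hasInduced_iff_isIndContained.2 ⟨⟨⟨_, hinj⟩, fun {i j} => ?_⟩⟩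
  fin_cases i <;> fin_cases j <;>
    simp +decide [hab, hbc, hcd, hac, hbd, hda.symm, adj_comm]

theorem contractEdge (h : G.IsInducedSquare a b c d) (ha : a ≠ v) (hb : b ≠ v) (hc : c ≠ v)
    (hd : d ≠ v) (hac : a = u → ¬G.Adj v c) (hca : c = u → ¬G.Adj v a)
    (hbd : b = u → ¬G.Adj v d) (hdb : d = u → ¬G.Adj v b) :
    (G.contractEdge u v).IsInducedSquare ⟨a, ha⟩ ⟨b, hb⟩ ⟨c, hc⟩ ⟨d, hd⟩ where
  adj_ab := contractEdge_adj_of_adj ha hb h.adj_ab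
  adj_bc := contractEdge_adj_of_adj hb hc h.adj_bc
  adj_cd := contractEdge_adj_of_adj hc hd h.adj_cd
  adj_da := contractEdge_adj_of_adj hd ha h.adj_da
  not_adj_ac := contractEdge_not_adj ha hc h.not_adj_ac hac hca
  not_adj_bd := contractEdge_not_adj hb hd h.not_adj_bd hbd hdb
  ne_ac := fun e => h.ne_ac (congrArg Subtype.val e)
  ne_bd := fun e => h.ne_bd (congrArg Subtype.val e)

theorem hasInduced_contractEdge_of_not_mem (h : G.IsInducedSquare a b c d)
    (hu : u ∉ ({a, b, c, d} : Set V)) (hv : v ∉ ({a, b, c, d} : Set V)) :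
    (G.contractEdge u v).HasInduced (cycleGraph 4) := by
  obtain ⟨hua, hub, huc, hud⟩ := not_mem_iff.1 hu
  obtain ⟨hva, hvb, hvc, hvd⟩ := not_mem_iff.1 hv
  exact (h.contractEdge (Ne.symm hva) (Ne.symm hvb) (Ne.symm hvc) (Ne.symm hvd)
    (fun e => absurd e.symm hua) (fun e => absurd e.symm huc) (fun e => absurd e.symm hub)
    (fun e => absurd e.symm hud)).hasInduced

theorem hasInduced_contractEdge_of_not_adj (h : G.IsInducedSquare a b c d)
    (hv : v ∉ ({a, b, c, d} : Set V)) (hvc : ¬G.Adj v c) :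
    (G.contractEdge a v).HasInduced (cycleGraph 4) := by
  obtain ⟨hva, hvb, hvc', hvd⟩ := not_mem_iff.1 hv
  exact (h.contractEdge (Ne.symm hva) (Ne.symm hvb) (Ne.symm hvc') (Ne.symm hvd)
    (fun _ => hvc) (fun e => absurd e h.ne_ac.symm) (fun e => absurd e h.adj_ab.ne')
    (fun e => absurd e h.adj_da.ne)).hasInduced

end IsInducedSquare

theorem hasInduced_cycleGraph_four_iff :
    G.HasInduced (cycleGraph 4) ↔ ∃ a b c d, G.IsInducedSquare a b c d := by
  refine ⟨fun hC => ?_, fun ⟨a, b, c, d, h⟩ => h.hasInduced⟩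
  obtain ⟨e⟩ := hasInduced_iff_isIndContained.1 hC
  have adj (i j : Fin 4) (hij : (cycleGraph 4).Adj i j) : G.Adj (e i) (e j) :=
    e.map_adj_iff.2 hij
  have not_adj (i j : Fin 4) (hij : ¬(cycleGraph 4).Adj i j) : ¬G.Adj (e i) (e j) :=
    mt e.map_adj_iff.1 hij
  exact ⟨e 0, e 1, e 2, e 3, adj 0 1 (by decide), adj 1 2 (by decide), adj 2 3 (by decide),
    adj 3 0 (by decide), not_adj 0 2 (by decide), not_adj 1 3 (by decide),
    e.injective.ne (by decide), e.injective.ne (by decide)⟩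

namespace IsInducedSquare

theorem not_adj_of_not_mem (h : G.IsInducedSquare a b c d) (hP : G.NoContractionHasInducedC4)
    (hx : x ∉ ({a, b, c, d} : Set V)) (hy : y ∉ ({a, b, c, d} : Set V)) : ¬G.Adj x y :=
  fun hxy => hP x y hxy (h.hasInduced_contractEdge_of_not_mem hx hy)

theorem adj_of_adj (h : G.IsInducedSquare a b c d) (hP : G.NoContractionHasInducedC4)
    (hw : w ∉ ({a, b, c, d} : Set V)) (hwa : G.Adj w a) : G.Adj w c := by
  by_contra hwc
  exact hP a w hwa.symm (h.hasInduced_contractEdge_of_not_adj hw hwc)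

theorem adj_iff_adj_opposite (h : G.IsInducedSquare a b c d)
    (hP : G.NoContractionHasInducedC4) (hw : w ∉ ({a, b, c, d} : Set V)) :
    (G.Adj w a ↔ G.Adj w c) ∧ (G.Adj w b ↔ G.Adj w d) := by
  have hw₁ : w ∉ ({b, c, d, a} : Set V) := mem_rotate_iff.not.2 hw
  have hw₂ : w ∉ ({c, d, a, b} : Set V) := mem_rotate_iff.not.2 hw₁
  have hw₃ : w ∉ ({d, a, b, c} : Set V) := mem_rotate_iff.not.2 hw₂
  exact ⟨⟨h.adj_of_adj hP hw, h.rotate.rotate.adj_of_adj hP hw₂⟩,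
    ⟨h.rotate.adj_of_adj hP hw₁, h.rotate.rotate.rotate.adj_of_adj hP hw₃⟩⟩

theorem adj_or_adj (h : G.IsInducedSquare a b c d) (hP : G.NoContractionHasInducedC4)
    (hG : G.Connected) (hw : w ∉ ({a, b, c, d} : Set V)) : G.Adj w a ∨ G.Adj w b := by
  have : Nontrivial V := ⟨⟨a, c, h.ne_ac⟩⟩
  obtain ⟨y, hwy⟩ := hG.preconnected.exists_adj_of_nontrivial w
  have hy : y ∈ ({a, b, c, d} : Set V) := by
    by_contra hy
    exact h.not_adj_of_not_mem hP hw hy hwy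
  obtain ⟨hac, hbd⟩ := h.adj_iff_adj_opposite hP hw
  simp only [Set.mem_insert_iff, Set.mem_singleton_iff] at hy
  rcases hy with rfl | rfl | rfl | rfl
  exacts [Or.inl hwy, Or.inr hwy, Or.inl (hac.2 hwy), Or.inr (hbd.2 hwy)]

theorem adj_adj_of_adj_adj (h : G.IsInducedSquare a b c d) (hP : G.NoContractionHasInducedC4)
    (hG : G.Connected) (hw₀ : w₀ ∉ ({a, b, c, d} : Set V)) (h₀a : G.Adj w₀ a)
    (h₀b : G.Adj w₀ b) (hw : w ∉ ({a, b, c, d} : Set V)) : G.Adj w a ∧ G.Adj w b := by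
  obtain ⟨hac, hbd⟩ := h.adj_iff_adj_opposite hP hw
  have hw₀w := h.not_adj_of_not_mem hP hw₀ hw
  have hwab := h.adj_or_adj hP hG hw
  obtain ⟨hw₀a, hw₀b, hw₀c, hw₀d⟩ := not_mem_iff.1 hw₀
  obtain ⟨hwa', hwb', -, -⟩ := not_mem_iff.1 hw
  by_contra hn
  rcases not_and_or.1 hn with hwa | hwb
  · have hwb := hwab.resolve_left hwa
    have hsq : G.IsInducedSquare a d w b := ⟨h.adj_da.symm, (hbd.1 hwb).symm, hwb,
      h.adj_ab.symm, fun e => hwa e.symm, fun e => h.not_adj_bd e.symm, hwa'.symm,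
      h.ne_bd.symm⟩
    exact hP a w₀ h₀a.symm (hsq.hasInduced_contractEdge_of_not_adj
      (not_mem_iff.2 ⟨hw₀a, hw₀d, fun e => hwa (e ▸ h₀a), hw₀b⟩) hw₀w)
  · have hwa := hwab.resolve_right hwb
    have hsq : G.IsInducedSquare b c w a := ⟨h.adj_bc, (hac.1 hwa).symm, hwa, h.adj_ab,
      fun e => hwb e.symm, fun e => h.not_adj_ac e.symm, hwb'.symm, h.ne_ac.symm⟩
    exact hP b w₀ h₀b.symm (hsq.hasInduced_contractEdge_of_not_adj
      (not_mem_iff.2 ⟨hw₀b, hw₀c, fun e => hwb (e ▸ h₀b), hw₀a⟩) hw₀w)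

theorem adj_or_adj_of_adj_of_adj (h : G.IsInducedSquare a b c d)
    (hP : G.NoContractionHasInducedC4) (hw₀ : w₀ ∉ ({a, b, c, d} : Set V))
    (hw₁ : w₁ ∉ ({a, b, c, d} : Set V)) (h₀b : G.Adj w₀ b) (h₁a : G.Adj w₁ a) :
    G.Adj w₀ a ∨ G.Adj w₁ b := by
  by_contra! hn
  have h₀d := (h.adj_iff_adj_opposite hP hw₀).2.1 h₀b
  have h₁₀ := h.not_adj_of_not_mem hP hw₁ hw₀
  obtain ⟨hw₁a, hw₁b, -, hw₁d⟩ := not_mem_iff.1 hw₁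
  have hsq : G.IsInducedSquare a b w₀ d := ⟨h.adj_ab, h₀b.symm, h₀d, h.adj_da,
    fun e => hn.1 e.symm, h.not_adj_bd, (not_mem_iff.1 hw₀).1.symm, h.ne_bd⟩
  exact hP a w₁ h₁a.symm (hsq.hasInduced_contractEdge_of_not_adj
    (not_mem_iff.2 ⟨hw₁a, hw₁b, fun e => hn.1 (e ▸ h₁a), hw₁d⟩) h₁₀)

theorem eq_or_eq_of_adj (h : G.IsInducedSquare a b c d) (hP : G.NoContractionHasInducedC4)
    (hw₀ : w₀ ∉ ({a, b, c, d} : Set V)) (hw₁ : w₁ ∉ ({a, b, c, d} : Set V))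
    (hw₂ : w₂ ∉ ({a, b, c, d} : Set V)) (h₀a : G.Adj w₀ a) (h₁a : G.Adj w₁ a)
    (h₂b : G.Adj w₂ b) (h₀₁ : w₀ ≠ w₁) : w₂ = w₀ ∨ w₂ = w₁ := by
  by_contra! hn
  have hsq : G.IsInducedSquare w₀ a w₁ c := ⟨h₀a, h₁a.symm, h.adj_of_adj hP hw₁ h₁a,
    (h.adj_of_adj hP hw₀ h₀a).symm, h.not_adj_of_not_mem hP hw₀ hw₁, h.not_adj_ac, h₀₁, h.ne_ac⟩
  obtain ⟨hw₂a, -, hw₂c, -⟩ := not_mem_iff.1 hw₂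
  exact hP b w₂ h₂b.symm (hsq.hasInduced_contractEdge_of_not_mem
    (not_mem_iff.2 ⟨(not_mem_iff.1 hw₀).2.1.symm, h.adj_ab.ne', (not_mem_iff.1 hw₁).2.1.symm,
      h.adj_bc.ne⟩)
    (not_mem_iff.2 ⟨hn.1, hw₂a, hn.2, hw₂c⟩))

theorem nonempty_iso_W4Graph (h : G.IsInducedSquare a b c d)
    (hw : G.Adj w a ∧ G.Adj w b ∧ G.Adj w c ∧ G.Adj w d)
    (huniv : ∀ x ∉ ({a, b, c, d} : Set V), x = w) : Nonempty (G ≃g W4Graph) := by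
  have hca := h.rotate.rotate.not_adj_ac
  have hdb := h.rotate.rotate.not_adj_bd
  obtain ⟨hab, hbc, hcd, hda, hac, hbd, hac', hbd'⟩ := h
  obtain ⟨hwa, hwb, hwc, hwd⟩ := hw
  have hinj : Function.Injective ![a, b, c, d, w] := by
    simp only [Function.Injective, Fin.forall_fin_succ]
    simp [hab.ne, hbc.ne, hcd.ne, hda.ne, hab.ne', hbc.ne', hcd.ne', hda.ne', hwa.ne, hwb.ne,
      hwc.ne, hwd.ne, hwa.ne', hwb.ne', hwc.ne', hwd.ne', hac', hbd', hac'.symm, hbd'.symm]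
  have hsurj : Function.Surjective ![a, b, c, d, w] := by
    intro x
    by_cases hx : x ∈ ({a, b, c, d} : Set V)
    · simp only [Set.mem_insert_iff, Set.mem_singleton_iff] at hx
      rcases hx with rfl | rfl | rfl | rfl
      exacts [⟨0, rfl⟩, ⟨1, rfl⟩, ⟨2, rfl⟩, ⟨3, rfl⟩]
    · exact ⟨4, (huniv x hx).symm⟩
  refine nonempty_iso_of_bijective ⟨hinj, hsurj⟩ fun i j => ?_
  simp only [W4Graph, fromEdgeSet_adj, Set.mem_insert_iff, Set.mem_singleton_iff]
  fin_cases i <;> fin_cases j <;> simp [hab, hbc, hcd, hda, hab.symm, hbc.symm, hcd.symm,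
    hda.symm, hac, hbd, hca, hdb, hwa, hwb, hwc, hwd, hwa.symm, hwb.symm, hwc.symm, hwd.symm]

theorem nonempty_iso_E2JoinC4Graph (h : G.IsInducedSquare a b c d)
    (hw : G.Adj w a ∧ G.Adj w b ∧ G.Adj w c ∧ G.Adj w d)
    (hz : G.Adj z a ∧ G.Adj z b ∧ G.Adj z c ∧ G.Adj z d) (hwz : ¬G.Adj w z) (hwz' : w ≠ z)
    (huniv : ∀ x ∉ ({a, b, c, d} : Set V), x = w ∨ x = z) :
    Nonempty (G ≃g E2JoinC4Graph) := by
  have hca := h.rotate.rotate.not_adj_ac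
  have hdb := h.rotate.rotate.not_adj_bd
  obtain ⟨hab, hbc, hcd, hda, hac, hbd, hac', hbd'⟩ := h
  obtain ⟨hwa, hwb, hwc, hwd⟩ := hw
  obtain ⟨hza, hzb, hzc, hzd⟩ := hz
  have hzw : ¬G.Adj z w := fun e => hwz e.symm
  have hinj : Function.Injective ![a, b, c, d, w, z] := by
    simp only [Function.Injective, Fin.forall_fin_succ]
    simp [hab.ne, hbc.ne, hcd.ne, hda.ne, hab.ne', hbc.ne', hcd.ne', hda.ne', hwa.ne, hwb.ne,
      hwc.ne, hwd.ne, hwa.ne', hwb.ne', hwc.ne', hwd.ne', hza.ne, hzb.ne, hzc.ne, hzd.ne,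
      hza.ne', hzb.ne', hzc.ne', hzd.ne', hac', hbd', hac'.symm, hbd'.symm, hwz', hwz'.symm]
  have hsurj : Function.Surjective ![a, b, c, d, w, z] := by
    intro x
    by_cases hx : x ∈ ({a, b, c, d} : Set V)
    · simp only [Set.mem_insert_iff, Set.mem_singleton_iff] at hx
      rcases hx with rfl | rfl | rfl | rfl
      exacts [⟨0, rfl⟩, ⟨1, rfl⟩, ⟨2, rfl⟩, ⟨3, rfl⟩]
    · rcases huniv x hx with rfl | rfl
      exacts [⟨4, rfl⟩, ⟨5, rfl⟩]
  refine nonempty_iso_of_bijective ⟨hinj, hsurj⟩ fun i j => ?_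
  simp only [E2JoinC4Graph, fromEdgeSet_adj, Set.mem_insert_iff, Set.mem_singleton_iff]
  fin_cases i <;> fin_cases j <;> simp [hab, hbc, hcd, hda, hab.symm, hbc.symm, hcd.symm,
    hda.symm, hac, hbd, hca, hdb, hwa, hwb, hwc, hwd, hwa.symm, hwb.symm, hwc.symm, hwd.symm,
    hza, hzb, hzc, hzd, hza.symm, hzb.symm, hzc.symm, hzd.symm, hwz, hzw]

theorem adj_iff_mem_pair [DecidableEq V] (h : G.IsInducedSquare a b c d)
    (hind : ∀ x ∉ ({a, b, c, d} : Set V), ∀ y ∉ ({a, b, c, d} : Set V), ¬G.Adj x y)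
    (hout : ∀ x ∉ ({a, b, c, d} : Set V),
      G.Adj x a ∧ G.Adj x c ∧ ¬G.Adj x b ∧ ¬G.Adj x d) (x y : V) :
    G.Adj x y ↔ (x ∈ ({a, c} : Finset V) ↔ y ∉ ({a, c} : Finset V)) := by
  have hca := h.rotate.rotate.not_adj_ac
  have hdb := h.rotate.rotate.not_adj_bd
  have hb : b ∉ ({a, c} : Finset V) := by simp [h.adj_ab.ne', h.adj_bc.ne]
  have hd : d ∉ ({a, c} : Finset V) := by simp [h.adj_da.ne, h.adj_cd.ne']
  have hout_not_mem : ∀ x ∉ ({a, b, c, d} : Set V), x ∉ ({a, c} : Finset V) := fun x hx => by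
    simp [(not_mem_iff.1 hx).1, (not_mem_iff.1 hx).2.2.1]
  by_cases hx : x ∈ ({a, b, c, d} : Set V) <;> by_cases hy : y ∈ ({a, b, c, d} : Set V)
  · simp only [Set.mem_insert_iff, Set.mem_singleton_iff] at hx hy
    rcases hx with rfl | rfl | rfl | rfl <;> rcases hy with rfl | rfl | rfl | rfl <;>
      simp [hb, hd, h.adj_ab, h.adj_bc, h.adj_cd, h.adj_da, h.adj_ab.symm, h.adj_bc.symm,
        h.adj_cd.symm, h.adj_da.symm, h.not_adj_ac, h.not_adj_bd, hca, hdb]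
  · obtain ⟨hya, hyc, hyb, hyd⟩ := hout y hy
    simp only [Set.mem_insert_iff, Set.mem_singleton_iff] at hx
    rcases hx with rfl | rfl | rfl | rfl <;>
      simp [hb, hd, hout_not_mem y hy, hya.symm, hyc.symm, mt G.adj_symm hyb, mt G.adj_symm hyd]
  · obtain ⟨hxa, hxc, hxb, hxd⟩ := hout x hx
    simp only [Set.mem_insert_iff, Set.mem_singleton_iff] at hy
    rcases hy with rfl | rfl | rfl | rfl <;> simp [hb, hd, hout_not_mem x hx, hxa, hxb, hxc, hxd]
  · simp [hind x hx y hy, hout_not_mem x hx, hout_not_mem y hy]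

theorem exists_iso_completeBipartiteGraph [Fintype V] (h : G.IsInducedSquare a b c d)
    (hind : ∀ x ∉ ({a, b, c, d} : Set V), ∀ y ∉ ({a, b, c, d} : Set V), ¬G.Adj x y)
    (hout : ∀ x ∉ ({a, b, c, d} : Set V),
      G.Adj x a ∧ G.Adj x c ∧ ¬G.Adj x b ∧ ¬G.Adj x d) :
    ∃ l, 2 ≤ l ∧ Nonempty (G ≃g completeBipartiteGraph (Fin 2) (Fin l)) := by
  classical
  set s : Finset V := {a, c}
  obtain ⟨e⟩ := nonempty_iso_completeBipartiteGraph (· ∈ s) (h.adj_iff_mem_pair hind hout)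
  have hs : Fintype.card {x // x ∈ s} = 2 := by
    rw [Fintype.card_coe, Finset.card_pair h.ne_ac]
  refine ⟨Fintype.card {x // x ∉ s}, Fintype.one_lt_card_iff.2 ⟨⟨b, ?_⟩, ⟨d, ?_⟩, ?_⟩,
    ⟨e.trans (completeBipartiteGraphCongr (Fintype.equivFinOfCardEq hs) (Fintype.equivFin _))⟩⟩
  · simp [s, h.adj_ab.ne', h.adj_bc.ne]
  · simp [s, h.adj_da.ne, h.adj_cd.ne']
  · simp [h.ne_bd]

theorem nonempty_iso_of_adj_adj (h : G.IsInducedSquare a b c d)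
    (hP : G.NoContractionHasInducedC4) (hG : G.Connected) (hw₀ : w₀ ∉ ({a, b, c, d} : Set V))
    (h₀a : G.Adj w₀ a) (h₀b : G.Adj w₀ b) :
    Nonempty (G ≃g W4Graph) ∨ Nonempty (G ≃g E2JoinC4Graph) := by
  have hfull : ∀ w ∉ ({a, b, c, d} : Set V), G.Adj w a ∧ G.Adj w b ∧ G.Adj w c ∧ G.Adj w d :=
    fun w hw => by
      obtain ⟨hwa, hwb⟩ := h.adj_adj_of_adj_adj hP hG hw₀ h₀a h₀b hw
      obtain ⟨hac, hbd⟩ := h.adj_iff_adj_opposite hP hw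
      exact ⟨hwa, hwb, hac.1 hwa, hbd.1 hwb⟩
  by_cases h₁ : ∃ w₁ ∉ ({a, b, c, d} : Set V), w₁ ≠ w₀
  · obtain ⟨w₁, hw₁, h₁₀⟩ := h₁
    refine Or.inr (h.nonempty_iso_E2JoinC4Graph (hfull w₀ hw₀) (hfull w₁ hw₁)
      (h.not_adj_of_not_mem hP hw₀ hw₁) h₁₀.symm fun x hx => ?_)
    exact h.eq_or_eq_of_adj hP hw₀ hw₁ hx h₀a (hfull w₁ hw₁).1 (hfull x hx).2.1 h₁₀.symm
  · push Not at h₁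
    exact Or.inl (h.nonempty_iso_W4Graph (hfull w₀ hw₀) h₁)

theorem exists_iso_completeBipartiteGraph_of_not_adj_adj [Fintype V]
    (h : G.IsInducedSquare a b c d) (hP : G.NoContractionHasInducedC4) (hG : G.Connected)
    (hfull : ∀ w ∉ ({a, b, c, d} : Set V), G.Adj w a → ¬G.Adj w b) :
    ∃ l, 2 ≤ l ∧ Nonempty (G ≃g completeBipartiteGraph (Fin 2) (Fin l)) := by
  by_cases hb : ∃ w₀ ∉ ({a, b, c, d} : Set V), G.Adj w₀ b
  · obtain ⟨w₀, hw₀, h₀b⟩ := hb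
    refine h.rotate.exists_iso_completeBipartiteGraph
      (fun x hx y hy => h.not_adj_of_not_mem hP (mem_rotate_iff.not.1 hx)
        (mem_rotate_iff.not.1 hy)) fun w hw => ?_
    rw [mem_rotate_iff] at hw
    obtain ⟨hac, hbd⟩ := h.adj_iff_adj_opposite hP hw
    have hwa : ¬G.Adj w a := fun hwa =>
      (h.adj_or_adj_of_adj_of_adj hP hw₀ hw h₀b hwa).elim (hfull w₀ hw₀ · h₀b) (hfull w hw hwa)
    have hwb := (h.adj_or_adj hP hG hw).resolve_left hwa
    exact ⟨hwb, hbd.1 hwb, mt hac.2 hwa, hwa⟩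
  · push Not at hb
    refine h.exists_iso_completeBipartiteGraph
      (fun x hx y hy => h.not_adj_of_not_mem hP hx hy) fun w hw => ?_
    obtain ⟨hac, hbd⟩ := h.adj_iff_adj_opposite hP hw
    have hwa := (h.adj_or_adj hP hG hw).resolve_right (hb w hw)
    exact ⟨hwa, hac.1 hwa, hb w hw, mt hbd.2 (hb w hw)⟩

end IsInducedSquare

end SimpleGraph

theorem stmt5_general {V : Type*} [Fintype V] (G : SimpleGraph V)
    (hG : G.Connected) (hC4 : G.HasInduced (cycleGraph 4)) :
    (∃ l : ℕ, 2 ≤ l ∧ Nonempty (G ≃g completeBipartiteGraph (Fin 2) (Fin l))) ∨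
    Nonempty (G ≃g W4Graph) ∨ Nonempty (G ≃g E2JoinC4Graph) ∨
    ∃ u v : V, G.Adj u v ∧ (G.contractEdge u v).HasInduced (cycleGraph 4) := by
  by_cases hP : G.NoContractionHasInducedC4
  · obtain ⟨a, b, c, d, h⟩ := hasInduced_cycleGraph_four_iff.1 hC4
    by_cases hfull : ∃ w ∉ ({a, b, c, d} : Set V), G.Adj w a ∧ G.Adj w b
    · obtain ⟨w, hw, hwa, hwb⟩ := hfull
      exact Or.inr ((h.nonempty_iso_of_adj_adj hP hG hw hwa hwb).imp_right Or.inl)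
    · push Not at hfull
      exact Or.inl (h.exists_iso_completeBipartiteGraph_of_not_adj_adj hP hG hfull)
  · simp only [NoContractionHasInducedC4, not_forall, not_not] at hP
    obtain ⟨u, v, huv, h⟩ := hP
    exact Or.inr (Or.inr (Or.inr ⟨u, v, huv, h⟩))

/-- Lemma 7. If a connected graph `G` has an induced `C₄`, then
either `G` is isomorphic to some `K_{2,l}` (`l ≥ 2`), to `W₄ = K₁ ∨ C₄`, or to
`E₂ ∨ C₄`, or some edge contraction of `G` still has an induced `C₄`. -/
theorem stmt5 {V : Type*} [Fintype V] [DecidableEq V] (G : SimpleGraph V)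
    (hG : G.Connected) (hC4 : G.HasInduced (cycleGraph 4)) :
    (∃ l : ℕ, 2 ≤ l ∧ Nonempty (G ≃g completeBipartiteGraph (Fin 2) (Fin l))) ∨
    Nonempty (G ≃g W4Graph) ∨ Nonempty (G ≃g E2JoinC4Graph) ∨
    ∃ u v : V, G.Adj u v ∧ (G.contractEdge u v).HasInduced (cycleGraph 4) :=
  stmt5_general G hG hC4
end

section
/- Let G be a connected (2K_2, claw)-free simple graph and let C = {p, q, r, s} ⊆ V(G) be a vertex set inducing a 4-cycle in G with edges pq, qr, rs, sp. Then C is a dominating set of G. -/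
/-
A vertex `w` outside the 4-cycle `p-q-r-s` with no neighbour on it still has a neighbour `x`, by
connectivity. Since `wx` and a cycle edge cannot form an induced `2K₂`, `x` is adjacent to an end of
every cycle edge, hence to both ends of a diagonal, say `p` and `r`. Then `x` is the centre of a
claw with leaves `w`, `p`, `r`.
-/

open SimpleGraph

/-- A set `C` is dominating if every vertex is in `C` or adjacent to a vertex of `C`. -/
def SimpleGraph.IsDominating {V : Type*} (G : SimpleGraph V) (C : Set V) : Prop :=
  ∀ w, w ∈ C ∨ ∃ x ∈ C, G.Adj x w

/-- The claw `K_{1,3}`. -/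
def clawGraph : SimpleGraph (Fin 4) := fromEdgeSet {s(0,1), s(0,2), s(0,3)}

namespace SimpleGraph

variable {V : Type*} {G : SimpleGraph V}

lemma hasInduced_of_injective {W : Type*} {H : SimpleGraph W} (f : W → V)
    (hf : Function.Injective f) (hadj : ∀ i j, G.Adj (f i) (f j) ↔ H.Adj i j) :
    G.HasInduced H :=
  (isIndContained_iff_exists_iso_induce.1 ⟨⟨⟨f, hf⟩, hadj _ _⟩⟩).imp fun _ ⟨e⟩ ↦ ⟨e.symm⟩

lemma hasInduced_twoK2 {a b c d : V} (hab : G.Adj a b) (hcd : G.Adj c d)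
    (hac : ¬ G.Adj a c) (had : ¬ G.Adj a d) (hbc : ¬ G.Adj b c) (hbd : ¬ G.Adj b d) :
    G.HasInduced twoK2 := by
  have := hab.ne; have := hcd.ne
  have : a ≠ c := by rintro rfl; exact had hcd
  have : a ≠ d := by rintro rfl; exact hac hcd.symm
  have : b ≠ c := by rintro rfl; exact hbd hcd
  have : b ≠ d := by rintro rfl; exact hbc hcd.symm
  refine hasInduced_of_injective ![a, b, c, d] ?_ fun i j ↦ ?_
  · intro i j
    fin_cases i <;> fin_cases j <;> simp_all [eq_comm]
  · fin_cases i <;> fin_cases j <;> simp_all [twoK2, G.adj_comm]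

lemma hasInduced_claw {x a b c : V} (hxa : G.Adj x a) (hxb : G.Adj x b) (hxc : G.Adj x c)
    (hab : ¬ G.Adj a b) (hac : ¬ G.Adj a c) (hbc : ¬ G.Adj b c)
    (nab : a ≠ b) (nac : a ≠ c) (nbc : b ≠ c) :
    G.HasInduced clawGraph := by
  have := hxa.ne; have := hxb.ne; have := hxc.ne
  refine hasInduced_of_injective ![x, a, b, c] ?_ fun i j ↦ ?_
  · intro i j
    fin_cases i <;> fin_cases j <;> simp_all [eq_comm]
  · fin_cases i <;> fin_cases j <;> simp_all [clawGraph, G.adj_comm]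

lemma adj_or_adj_of_not_hasInduced_twoK2 (h2K2 : ¬ G.HasInduced twoK2) {w x a b : V}
    (hwx : G.Adj w x) (hab : G.Adj a b) (hwa : ¬ G.Adj w a) (hwb : ¬ G.Adj w b) :
    G.Adj x a ∨ G.Adj x b := by
  by_contra! h
  exact h2K2 (hasInduced_twoK2 hwx hab hwa hwb h.1 h.2)

lemma adj_diagonal_of_not_hasInduced_twoK2 (h2K2 : ¬ G.HasInduced twoK2) {p q r s w x : V}
    (hpq : G.Adj p q) (hqr : G.Adj q r) (hrs : G.Adj r s) (hsp : G.Adj s p) (hwx : G.Adj w x)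
    (hwp : ¬ G.Adj w p) (hwq : ¬ G.Adj w q) (hwr : ¬ G.Adj w r) (hws : ¬ G.Adj w s) :
    (G.Adj x p ∧ G.Adj x r) ∨ (G.Adj x q ∧ G.Adj x s) := by
  have := adj_or_adj_of_not_hasInduced_twoK2 h2K2 hwx hpq hwp hwq
  have := adj_or_adj_of_not_hasInduced_twoK2 h2K2 hwx hqr hwq hwr
  have := adj_or_adj_of_not_hasInduced_twoK2 h2K2 hwx hrs hwr hws
  have := adj_or_adj_of_not_hasInduced_twoK2 h2K2 hwx hsp hws hwp
  tauto

end SimpleGraph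

theorem stmt14_general {V : Type*} (G : SimpleGraph V)
    (hG : G.Connected) (h2K2 : ¬ G.HasInduced twoK2) (hclaw : ¬ G.HasInduced clawGraph)
    (p q r s : V) (hdist : [p, q, r, s].Nodup)
    (hpq : G.Adj p q) (hqr : G.Adj q r) (hrs : G.Adj r s) (hsp : G.Adj s p)
    (hpr : ¬ G.Adj p r) (hqs : ¬ G.Adj q s) :
    G.IsDominating {p, q, r, s} := by
  intro w
  by_contra! hw
  simp only [Set.mem_insert_iff, Set.mem_singleton_iff, forall_eq_or_imp, forall_eq, not_or,
    G.adj_comm _ w] at hw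
  obtain ⟨⟨nwp, nwq, nwr, nws⟩, hwp, hwq, hwr, hws⟩ := hw
  obtain ⟨x, hwx⟩ := (hG.preconnected w p).nonempty_neighborSet_left nwp
  simp only [List.nodup_cons, List.mem_cons, List.not_mem_nil, or_false, not_or] at hdist
  obtain ⟨⟨-, npr, -⟩, ⟨-, nqs⟩, -⟩ := hdist
  rcases adj_diagonal_of_not_hasInduced_twoK2 h2K2 hpq hqr hrs hsp hwx hwp hwq hwr hws with
    ⟨hxp, hxr⟩ | ⟨hxq, hxs⟩
  · exact hclaw (hasInduced_claw hwx.symm hxp hxr hwp hwr hpr nwp nwr npr)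
  · exact hclaw (hasInduced_claw hwx.symm hxq hxs hwq hws hqs nwq nws nqs)

/-- Claim 12.8. In a connected `(2K₂, claw)`-free graph, the vertex
set of any induced 4-cycle `p-q-r-s` is dominating. -/
theorem stmt14 {V : Type*} [Fintype V] [DecidableEq V] (G : SimpleGraph V)
    (hG : G.Connected) (h2K2 : ¬ G.HasInduced twoK2) (hclaw : ¬ G.HasInduced clawGraph)
    (p q r s : V) (hdist : [p, q, r, s].Nodup)
    (hpq : G.Adj p q) (hqr : G.Adj q r) (hrs : G.Adj r s) (hsp : G.Adj s p)
    (hpr : ¬ G.Adj p r) (hqs : ¬ G.Adj q s) :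
    G.IsDominating {p, q, r, s} :=
  stmt14_general G hG h2K2 hclaw p q r s hdist hpq hqr hrs hsp hpr hqs
end
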